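/- arXiv:2406.19916 — 3 statements merged into one kernel-verified Lean document; each statement's English description precedes it below -/
import Mathlib

section
/- Let H be a finite-dimensional complex inner product space, H_0 ⊆ H a subspace with dim H_0 = d+1 and dim H = d+1+m where m ≥ 1, and let M_1, M_2 : H_0 → H be linear maps that are symmetric, i.e. ⟨M_k u, v⟩ = ⟨u, M_k v⟩ for all u, v ∈ H_0 and k = 1, 2. Let g_0, …, g_{d+m} be an orthonormal basis of H such that g_0, …, g_d is an orthonormal basis of H_0, and define the matrices A_k = (⟨M_k g_l, g_j⟩)_{0≤j,l≤d} and B_k = (⟨M_k g_l, g_j⟩)_{d+1≤j≤d+m, 0≤l≤d} for k = 1, 2. Then there exist commuting self-adjoint operators R_1, R_2 : H → H with R_k u = M_k u for all u ∈ H_0 (k = 1, 2) if and only if A_1 A_2 + B_1ᴴ B_2 = A_2 A_1 + B_2ᴴ B_1 and there exist Hermitian m×m complex matrices C_1, C_2 such that B_2ᴴ C_1 − B_1ᴴ C_2 = A_1 B_2ᴴ − A_2 B_1ᴴ and C_1 C_2 − C_2 C_1 = B_2 B_1ᴴ − B_1 B_2ᴴ. -/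
open Matrix
open scoped ComplexInnerProductSpace

section Aux

variable {ι : Type*} [Fintype ι] [DecidableEq ι]
variable {H : Type*} [NormedAddCommGroup H] [InnerProductSpace ℂ H]

/-- The matrix of an operator in an orthonormal basis, with entries `⟪R (b l), b j⟫`. -/
noncomputable def CSE.matOf (b : OrthonormalBasis ι ℂ H) (R : H →ₗ[ℂ] H) : Matrix ι ι ℂ :=
  Matrix.of fun j l => ⟪R (b l), b j⟫

/-- The operator with matrix `M` (w.r.t. `CSE.matOf`). -/
noncomputable def CSE.opOf (b : OrthonormalBasis ι ℂ H) (M : Matrix ι ι ℂ) : H →ₗ[ℂ] H :=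
  Matrix.toLin b.toBasis b.toBasis (M.map (starRingEnd ℂ))

namespace CSE

variable (b : OrthonormalBasis ι ℂ H)

lemma matOf_apply (R : H →ₗ[ℂ] H) (j l : ι) : matOf b R j l = ⟪R (b l), b j⟫ := rfl

lemma matOf_mul (R S : H →ₗ[ℂ] H) : matOf b (R ∘ₗ S) = matOf b R * matOf b S := by
  ext j l
  rw [Matrix.mul_apply, matOf_apply, LinearMap.comp_apply]
  conv_lhs => rw [← b.sum_repr' (S (b l))]
  rw [map_sum, sum_inner]
  refine Finset.sum_congr rfl fun p _ => ?_
  rw [LinearMap.map_smul, inner_smul_left, inner_conj_symm, matOf_apply, matOf_apply, mul_comm]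

lemma matOf_opOf (M : Matrix ι ι ℂ) : matOf b (opOf b M) = M := by
  ext j l
  rw [matOf_apply, opOf, show b l = b.toBasis l from (b.coe_toBasis ▸ rfl),
    Matrix.toLin_self, sum_inner]
  simp only [b.coe_toBasis, inner_smul_left, Matrix.map_apply, starRingEnd_self_apply,
    orthonormal_iff_ite.mp b.orthonormal]
  simp

lemma opOf_mul (M N : Matrix ι ι ℂ) : opOf b (M * N) = opOf b M ∘ₗ opOf b N := by
  unfold opOf
  rw [show (M * N).map (starRingEnd ℂ) = M.map (starRingEnd ℂ) * N.map (starRingEnd ℂ) from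
    Matrix.map_mul, Matrix.toLin_mul b.toBasis b.toBasis b.toBasis]

lemma symmetric_iff (R : H →ₗ[ℂ] H) :
    (∀ u v : H, ⟪R u, v⟫ = ⟪u, R v⟫) ↔ (matOf b R).IsHermitian := by
  constructor
  · intro h
    ext j l
    rw [Matrix.conjTranspose_apply, matOf_apply, matOf_apply, RCLike.star_def,
      inner_conj_symm]
    exact (h _ _).symm
  · intro h u v
    have key : ∀ j l, ⟪R (b l), b j⟫ = ⟪b l, R (b j)⟫ := by
      intro j l
      have h1 := congrFun (congrFun h j) l
      rw [Matrix.conjTranspose_apply, matOf_apply, matOf_apply, RCLike.star_def,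
        inner_conj_symm] at h1
      exact h1.symm
    have stepA : ∀ (j : ι) (u : H), ⟪b j, R u⟫ = ⟪R (b j), u⟫ := by
      intro j
      have hlin : (innerSL ℂ (b j)).toLinearMap ∘ₗ R = (innerSL ℂ (R (b j))).toLinearMap :=
        b.toBasis.ext fun l => by
          simp only [LinearMap.comp_apply, ContinuousLinearMap.coe_coe, innerSL_apply_apply,
            b.coe_toBasis]
          calc ⟪b j, R (b l)⟫ = starRingEnd ℂ ⟪R (b l), b j⟫ := (inner_conj_symm _ _).symm
            _ = starRingEnd ℂ ⟪b l, R (b j)⟫ := by rw [key]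
            _ = ⟪R (b j), b l⟫ := inner_conj_symm _ _
      exact fun u => LinearMap.congr_fun hlin u
    have hlin2 : (innerSL ℂ u).toLinearMap ∘ₗ R = (innerSL ℂ (R u)).toLinearMap :=
      b.toBasis.ext fun j => by
        simp only [LinearMap.comp_apply, ContinuousLinearMap.coe_coe, innerSL_apply_apply,
          b.coe_toBasis]
        calc ⟪u, R (b j)⟫ = starRingEnd ℂ ⟪R (b j), u⟫ := (inner_conj_symm _ _).symm
          _ = starRingEnd ℂ ⟪b j, R u⟫ := by rw [stepA]
          _ = ⟪R u, b j⟫ := inner_conj_symm _ _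
    exact (LinearMap.congr_fun hlin2 v).symm

end CSE
end Aux

/-- Symmetric operators `M₁, M₂ : H₀ → H` on a codimension-`m` subspace of a
finite-dimensional complex inner product space admit commuting self-adjoint extensions to `H`
iff `A₁A₂ + B₁ᴴB₂ = A₂A₁ + B₂ᴴB₁` and there exist Hermitian `m×m` matrices `C₁, C₂`
satisfying `B₂ᴴC₁ − B₁ᴴC₂ = A₁B₂ᴴ − A₂B₁ᴴ` and `C₁C₂ − C₂C₁ = B₂B₁ᴴ − B₁B₂ᴴ`. -/
theorem commuting_selfadjoint_extensions_iff (d m : ℕ) (hm : 1 ≤ m)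
    (H : Type*) [NormedAddCommGroup H] [InnerProductSpace ℂ H] [FiniteDimensional ℂ H]
    (H₀ : Submodule ℂ H)
    (hdimH₀ : Module.finrank ℂ H₀ = d + 1)
    (hdimH : Module.finrank ℂ H = d + 1 + m)
    (M₁ M₂ : H₀ →ₗ[ℂ] H)
    (hM₁sym : ∀ u v : H₀, ⟪M₁ u, (v : H)⟫ = ⟪(u : H), M₁ v⟫)
    (hM₂sym : ∀ u v : H₀, ⟪M₂ u, (v : H)⟫ = ⟪(u : H), M₂ v⟫)
    (g : Fin (d + 1 + m) → H)
    (hg : Orthonormal ℂ g)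
    (hgspan : Submodule.span ℂ (Set.range g) = ⊤)
    (g₀ : Fin (d + 1) → H₀)
    (hg₀ : ∀ i : Fin (d + 1), (g₀ i : H) = g (Fin.castAdd m i))
    (hg₀span : Submodule.span ℂ (Set.range g₀) = ⊤)
    (A₁ A₂ : Matrix (Fin (d + 1)) (Fin (d + 1)) ℂ)
    (B₁ B₂ : Matrix (Fin m) (Fin (d + 1)) ℂ)
    (hA₁ : ∀ j l, A₁ j l = ⟪M₁ (g₀ l), (g₀ j : H)⟫)
    (hA₂ : ∀ j l, A₂ j l = ⟪M₂ (g₀ l), (g₀ j : H)⟫)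
    (hB₁ : ∀ (j : Fin m) (l : Fin (d + 1)), B₁ j l = ⟪M₁ (g₀ l), g (Fin.natAdd (d + 1) j)⟫)
    (hB₂ : ∀ (j : Fin m) (l : Fin (d + 1)), B₂ j l = ⟪M₂ (g₀ l), g (Fin.natAdd (d + 1) j)⟫) :
    (∃ R₁ R₂ : H →ₗ[ℂ] H,
      (∀ u v : H, ⟪R₁ u, v⟫ = ⟪u, R₁ v⟫) ∧
      (∀ u v : H, ⟪R₂ u, v⟫ = ⟪u, R₂ v⟫) ∧
      R₁ ∘ₗ R₂ = R₂ ∘ₗ R₁ ∧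
      (∀ u : H₀, R₁ (u : H) = M₁ u) ∧
      (∀ u : H₀, R₂ (u : H) = M₂ u)) ↔
    (A₁ * A₂ + B₁ᴴ * B₂ = A₂ * A₁ + B₂ᴴ * B₁ ∧
      ∃ C₁ C₂ : Matrix (Fin m) (Fin m) ℂ, C₁.IsHermitian ∧ C₂.IsHermitian ∧
        B₂ᴴ * C₁ - B₁ᴴ * C₂ = A₁ * B₂ᴴ - A₂ * B₁ᴴ ∧
        C₁ * C₂ - C₂ * C₁ = B₂ * B₁ᴴ - B₁ * B₂ᴴ) := by
  classical
  set b0 : OrthonormalBasis (Fin (d + 1 + m)) ℂ H := OrthonormalBasis.mk hg hgspan.ge with hb0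
  set b : OrthonormalBasis (Fin (d + 1) ⊕ Fin m) ℂ H := b0.reindex finSumFinEquiv.symm with hb
  have hbl : ∀ i : Fin (d + 1), b (Sum.inl i) = (g₀ i : H) := by
    intro i
    rw [hb, OrthonormalBasis.reindex_apply, Equiv.symm_symm, finSumFinEquiv_apply_left, hb0,
      show ⇑(OrthonormalBasis.mk hg hgspan.ge) = g from OrthonormalBasis.coe_mk hg hgspan.ge,
      hg₀]
  have hbr : ∀ j : Fin m, b (Sum.inr j) = g (Fin.natAdd (d + 1) j) := by
    intro j
    rw [hb, OrthonormalBasis.reindex_apply, Equiv.symm_symm, finSumFinEquiv_apply_right, hb0,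
      show ⇑(OrthonormalBasis.mk hg hgspan.ge) = g from OrthonormalBasis.coe_mk hg hgspan.ge]
  constructor
  · rintro ⟨R₁, R₂, h₁, h₂, hc, he₁, he₂⟩
    have hH₁ := (CSE.symmetric_iff b R₁).mp h₁
    have hH₂ := (CSE.symmetric_iff b R₂).mp h₂
    set C₁ : Matrix (Fin m) (Fin m) ℂ := (CSE.matOf b R₁).toBlocks₂₂ with hC₁def
    set C₂ : Matrix (Fin m) (Fin m) ℂ := (CSE.matOf b R₂).toBlocks₂₂ with hC₂def
    have hblock : ∀ (R : H →ₗ[ℂ] H) (A : Matrix (Fin (d+1)) (Fin (d+1)) ℂ)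
        (B : Matrix (Fin m) (Fin (d+1)) ℂ) (M : H₀ →ₗ[ℂ] H),
        (∀ u v : H, ⟪R u, v⟫ = ⟪u, R v⟫) →
        (∀ u : H₀, R (u : H) = M u) →
        (∀ j l, A j l = ⟪M (g₀ l), (g₀ j : H)⟫) →
        (∀ j l, B j l = ⟪M (g₀ l), g (Fin.natAdd (d + 1) j)⟫) →
        CSE.matOf b R = fromBlocks A Bᴴ B ((CSE.matOf b R).toBlocks₂₂) := by
      intro R A B M hsym hext hA hB
      have hHR := (CSE.symmetric_iff b R).mp hsym
      have h11 : ∀ j l, CSE.matOf b R (Sum.inl j) (Sum.inl l) = A j l := by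
        intro j l
        rw [CSE.matOf_apply, hbl, hbl, hext, hA]
      have h21 : ∀ j l, CSE.matOf b R (Sum.inr j) (Sum.inl l) = B j l := by
        intro j l
        rw [CSE.matOf_apply, hbl, hbr, hext, hB]
      ext p q
      rcases p with j | j <;> rcases q with l | l
      · rw [h11]; rfl
      · have := congrFun (congrFun hHR (Sum.inl j)) (Sum.inr l)
        rw [Matrix.conjTranspose_apply, h21] at this
        rw [← this]; rfl
      · rw [h21]; rfl
      · rfl
    have hT₁ := hblock R₁ A₁ B₁ M₁ h₁ he₁ hA₁ hB₁
    have hT₂ := hblock R₂ A₂ B₂ M₂ h₂ he₂ hA₂ hB₂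
    have hMM : fromBlocks A₁ B₁ᴴ B₁ C₁ * fromBlocks A₂ B₂ᴴ B₂ C₂
        = fromBlocks A₂ B₂ᴴ B₂ C₂ * fromBlocks A₁ B₁ᴴ B₁ C₁ := by
      rw [hC₁def, hC₂def, ← hT₁, ← hT₂, ← CSE.matOf_mul, ← CSE.matOf_mul, hc]
    rw [Matrix.fromBlocks_multiply, Matrix.fromBlocks_multiply, Matrix.fromBlocks_inj] at hMM
    obtain ⟨e11, e12, -, e22⟩ := hMM
    have hC₁herm : C₁.IsHermitian := by
      ext j l
      have := congrFun (congrFun hH₁ (Sum.inr j)) (Sum.inr l)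
      rw [Matrix.conjTranspose_apply] at this
      rw [Matrix.conjTranspose_apply]
      exact this
    have hC₂herm : C₂.IsHermitian := by
      ext j l
      have := congrFun (congrFun hH₂ (Sum.inr j)) (Sum.inr l)
      rw [Matrix.conjTranspose_apply] at this
      rw [Matrix.conjTranspose_apply]
      exact this
    refine ⟨e11, C₁, C₂, hC₁herm, hC₂herm, ?_, ?_⟩
    · rw [sub_eq_sub_iff_add_eq_add, add_comm (B₂ᴴ * C₁) (A₂ * B₁ᴴ)]
      exact e12.symm
    · rw [sub_eq_sub_iff_add_eq_add, add_comm (C₁ * C₂) (B₁ * B₂ᴴ)]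
      exact e22
  · rintro ⟨hAA, C₁, C₂, hC₁, hC₂, h1, h2⟩
    have hA₁herm : A₁.IsHermitian := by
      ext j l
      rw [Matrix.conjTranspose_apply, hA₁, hA₁, RCLike.star_def, inner_conj_symm]
      exact (hM₁sym _ _).symm
    have hA₂herm : A₂.IsHermitian := by
      ext j l
      rw [Matrix.conjTranspose_apply, hA₂, hA₂, RCLike.star_def, inner_conj_symm]
      exact (hM₂sym _ _).symm
    set T₁ : Matrix (Fin (d+1) ⊕ Fin m) (Fin (d+1) ⊕ Fin m) ℂ := fromBlocks A₁ B₁ᴴ B₁ C₁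
      with hT₁def
    set T₂ : Matrix (Fin (d+1) ⊕ Fin m) (Fin (d+1) ⊕ Fin m) ℂ := fromBlocks A₂ B₂ᴴ B₂ C₂
      with hT₂def
    have hT₁herm : T₁.IsHermitian := by
      show T₁ᴴ = T₁
      rw [hT₁def, Matrix.fromBlocks_conjTranspose, Matrix.conjTranspose_conjTranspose,
        hA₁herm.eq, hC₁.eq]
    have hT₂herm : T₂.IsHermitian := by
      show T₂ᴴ = T₂
      rw [hT₂def, Matrix.fromBlocks_conjTranspose, Matrix.conjTranspose_conjTranspose,
        hA₂herm.eq, hC₂.eq]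
    have g12 : A₁ * B₂ᴴ + B₁ᴴ * C₂ = A₂ * B₁ᴴ + B₂ᴴ * C₁ := by
      rw [sub_eq_sub_iff_add_eq_add] at h1
      rw [add_comm (A₂ * B₁ᴴ) (B₂ᴴ * C₁)]
      exact h1.symm
    have g21 : B₁ * A₂ + C₁ * B₂ = B₂ * A₁ + C₂ * B₁ := by
      have := congrArg Matrix.conjTranspose g12
      rw [Matrix.conjTranspose_add, Matrix.conjTranspose_add, Matrix.conjTranspose_mul,
        Matrix.conjTranspose_mul, Matrix.conjTranspose_mul, Matrix.conjTranspose_mul,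
        Matrix.conjTranspose_conjTranspose, Matrix.conjTranspose_conjTranspose,
        hA₁herm.eq, hA₂herm.eq, hC₁.eq, hC₂.eq] at this
      exact this.symm
    have g22 : B₁ * B₂ᴴ + C₁ * C₂ = B₂ * B₁ᴴ + C₂ * C₁ := by
      rw [sub_eq_sub_iff_add_eq_add, add_comm (C₁ * C₂) (B₁ * B₂ᴴ)] at h2
      exact h2
    have hTcomm : T₁ * T₂ = T₂ * T₁ := by
      rw [hT₁def, hT₂def, Matrix.fromBlocks_multiply, Matrix.fromBlocks_multiply,
        Matrix.fromBlocks_inj]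
      exact ⟨hAA, g12, g21, g22⟩
    refine ⟨CSE.opOf b T₁, CSE.opOf b T₂, ?_, ?_, ?_, ?_, ?_⟩
    · exact (CSE.symmetric_iff b _).mpr (by rw [CSE.matOf_opOf]; exact hT₁herm)
    · exact (CSE.symmetric_iff b _).mpr (by rw [CSE.matOf_opOf]; exact hT₂herm)
    · rw [← CSE.opOf_mul, ← CSE.opOf_mul, hTcomm]
    · -- extension of M₁
      have hgen : ∀ l, CSE.opOf b T₁ ((g₀ l : H)) = M₁ (g₀ l) := by
        intro l
        rw [← hbl, show b (Sum.inl l) = b.toBasis (Sum.inl l) from (b.coe_toBasis ▸ rfl),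
          CSE.opOf, Matrix.toLin_self]
        conv_rhs => rw [← b.sum_repr' ((M₁ (g₀ l) : H))]
        refine Finset.sum_congr rfl fun p _ => ?_
        rw [b.coe_toBasis]
        congr 1
        rcases p with j | j
        · rw [Matrix.map_apply, hT₁def, hbl]
          show starRingEnd ℂ (A₁ j l) = _
          rw [hA₁, inner_conj_symm]
        · rw [Matrix.map_apply, hT₁def, hbr]
          show starRingEnd ℂ (B₁ j l) = _
          rw [hB₁, inner_conj_symm]
      have := LinearMap.ext_on_range hg₀span (f := CSE.opOf b T₁ ∘ₗ H₀.subtype) (g := M₁)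
        (fun l => hgen l)
      exact fun u => LinearMap.congr_fun this u
    · -- extension of M₂
      have hgen : ∀ l, CSE.opOf b T₂ ((g₀ l : H)) = M₂ (g₀ l) := by
        intro l
        rw [← hbl, show b (Sum.inl l) = b.toBasis (Sum.inl l) from (b.coe_toBasis ▸ rfl),
          CSE.opOf, Matrix.toLin_self]
        conv_rhs => rw [← b.sum_repr' ((M₂ (g₀ l) : H))]
        refine Finset.sum_congr rfl fun p _ => ?_
        rw [b.coe_toBasis]
        congr 1
        rcases p with j | j
        · rw [Matrix.map_apply, hT₂def, hbl]
          show starRingEnd ℂ (A₂ j l) = _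
          rw [hA₂, inner_conj_symm]
        · rw [Matrix.map_apply, hT₂def, hbr]
          show starRingEnd ℂ (B₂ j l) = _
          rw [hB₂, inner_conj_symm]
      have := LinearMap.ext_on_range hg₀span (f := CSE.opOf b T₂ ∘ₗ H₀.subtype) (g := M₂)
        (fun l => hgen l)
      exact fun u => LinearMap.congr_fun this u
end

section
/- Let n ≥ 1, let K ⊆ ℤ_+^n be a finite set, let H be a finite-dimensional complex inner product space, let x : K → H be a family of vectors, and let s : ℤ_+^n → ℝ satisfy ⟨x(k), x(m)⟩ = s(k + m) for all k, m ∈ K. Let Ω_0 = {k ∈ K : k + e_l ∈ K for all l = 1,…,n}, and suppose the vectors {x(k) : k ∈ Ω_0} span H (dimensional stability). Suppose moreover that for each l ∈ {1,…,n} there is a linear operator M_l : H → H with M_l x(k) = x(k + e_l) for every k ∈ K with k + e_l ∈ K. Then each M_l is self-adjoint and M_a M_b = M_b M_a for all a, b ∈ {1,…,n}. -/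
open scoped ComplexInnerProductSpace InnerProductSpace

/-!
The Gram relations `⟪x k, x m⟫ = s (k + m)` say that `⟪M_l x k, x m⟫` and `⟪x k, M_l x m⟫` are
both the moment `s (k + m + e_l)` for interior `k, m`, and that `⟪M_b x k, M_a x m⟫` is the
moment `s (k + m + e_a + e_b)`, which is symmetric in `a` and `b`. Since the interior vectors
span `H`, these identities between sesquilinear expressions extend from the interior vectors to
all of `H`, giving self-adjointness and then commutativity.
-/

namespace LinearMap

variable {𝕜 E : Type*} [RCLike 𝕜] [NormedAddCommGroup E] [InnerProductSpace 𝕜 E]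
  {S : Set E}

theorem isSymmetric_of_span_eq_top (hS : Submodule.span 𝕜 S = ⊤) {T : E →ₗ[𝕜] E}
    (h : ∀ u ∈ S, ∀ v ∈ S, ⟪T u, v⟫_𝕜 = ⟪u, T v⟫_𝕜) : T.IsSymmetric := by
  have hform : (innerₛₗ 𝕜).comp T = (innerₛₗ 𝕜).compl₂ T :=
    ext_on hS fun u hu ↦ ext_on hS fun v hv ↦ h u hu v hv
  exact fun u v ↦ congr($hform u v)

theorem comp_comm_of_isSymmetric_of_span_eq_top (hS : Submodule.span 𝕜 S = ⊤)
    {A B : E →ₗ[𝕜] E} (hA : A.IsSymmetric) (hB : B.IsSymmetric)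
    (h : ∀ u ∈ S, ∀ v ∈ S, ⟪B u, A v⟫_𝕜 = ⟪A u, B v⟫_𝕜) : A ∘ₗ B = B ∘ₗ A := by
  refine ext_on hS fun u hu ↦ ext_inner_right 𝕜 fun v ↦ ?_
  have hform : innerₛₗ 𝕜 (A (B u)) = innerₛₗ 𝕜 (B (A u)) :=
    ext_on hS fun v hv ↦ by
      rw [innerₛₗ_apply_apply, innerₛₗ_apply_apply, hA (B u), hB (A u)]
      exact h u hu v hv
  exact congr($hform v)

end LinearMap

theorem dimensional_stability_implies_complete_selfadjointness_general
    (n : ℕ) (K : Set (Fin n → ℕ))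
    (H : Type*) [NormedAddCommGroup H] [InnerProductSpace ℂ H]
    (x : (Fin n → ℕ) → H) (s : (Fin n → ℕ) → ℝ)
    (hs : ∀ k ∈ K, ∀ m ∈ K, ⟪x k, x m⟫ = ((s (k + m) : ℝ) : ℂ))
    (hspan : Submodule.span ℂ
      (x '' {k ∈ K | ∀ l : Fin n, k + Pi.single l 1 ∈ K}) = ⊤)
    (M : Fin n → (H →ₗ[ℂ] H))
    (hM : ∀ l : Fin n, ∀ k ∈ K, k + Pi.single l 1 ∈ K →
      M l (x k) = x (k + Pi.single l 1)) :
    (∀ l : Fin n, ∀ u v : H, ⟪M l u, v⟫ = ⟪u, M l v⟫) ∧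
    (∀ a b : Fin n, M a ∘ₗ M b = M b ∘ₗ M a) := by
  have hsymm (l : Fin n) : (M l).IsSymmetric := by
    refine LinearMap.isSymmetric_of_span_eq_top hspan ?_
    rintro _ ⟨k, ⟨hk, hkl⟩, rfl⟩ _ ⟨m, ⟨hm, hml⟩, rfl⟩
    rw [hM l k hk (hkl l), hM l m hm (hml l), hs _ (hkl l) m hm, hs k hk _ (hml l), add_right_comm,
      add_assoc]
  refine ⟨hsymm, fun a b ↦ ?_⟩
  refine LinearMap.comp_comm_of_isSymmetric_of_span_eq_top hspan (hsymm a) (hsymm b) ?_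
  rintro _ ⟨k, ⟨hk, hkl⟩, rfl⟩ _ ⟨m, ⟨hm, hml⟩, rfl⟩
  rw [hM a k hk (hkl a), hM b k hk (hkl b), hM a m hm (hml a), hM b m hm (hml b),
    hs _ (hkl b) _ (hml a), hs _ (hkl a) _ (hml b), add_add_add_comm, add_comm (Pi.single b 1),
    add_add_add_comm]

/-- Theorem 1 (operator-theoretic content): if the Gram structure of the vectors `x k`, `k ∈ K`,
is given by real moments `s`, the interior vectors `{x k : k ∈ Ω₀}` span `H` (dimensional
stability), and the multiplication operators `M l` satisfy `M l (x k) = x (k + e_l)` whenever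
`k, k + e_l ∈ K`, then every `M l` is self-adjoint and the `M l` pairwise commute. -/
theorem dimensional_stability_implies_complete_selfadjointness
    (n : ℕ) (hn : 1 ≤ n) (K : Set (Fin n → ℕ)) (hKfin : K.Finite)
    (H : Type*) [NormedAddCommGroup H] [InnerProductSpace ℂ H] [FiniteDimensional ℂ H]
    (x : (Fin n → ℕ) → H) (s : (Fin n → ℕ) → ℝ)
    (hs : ∀ k ∈ K, ∀ m ∈ K, ⟪x k, x m⟫ = ((s (k + m) : ℝ) : ℂ))
    (hspan : Submodule.span ℂ
      (x '' {k ∈ K | ∀ l : Fin n, k + Pi.single l 1 ∈ K}) = ⊤)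
    (M : Fin n → (H →ₗ[ℂ] H))
    (hM : ∀ l : Fin n, ∀ k ∈ K, k + Pi.single l 1 ∈ K →
      M l (x k) = x (k + Pi.single l 1)) :
    (∀ l : Fin n, ∀ u v : H, ⟪M l u, v⟫ = ⟪u, M l v⟫) ∧
    (∀ a b : Fin n, M a ∘ₗ M b = M b ∘ₗ M a) :=
  dimensional_stability_implies_complete_selfadjointness_general n K H x s hs hspan M hM
end

section
/- Let n ≥ 1, let μ be a (non-negative) measure on the Borel sets of ℝ^n, let K = {k_0, …, k_ρ} ⊆ ℤ_+^n (with the k_j pairwise distinct), and let l ∈ {1,…,n}. Suppose that for all j, m ∈ {0,…,ρ} the monomials t ↦ t^{k_j + k_m} and t ↦ t^{k_j + k_m + 2 e_l} are μ-integrable, and set s_w = ∫ t^w dμ(t) for these exponents w. Let Ω_l = {j ∈ {0,…,ρ} : k_j + e_l ∈ K}, Γ_l = (s_{k_j + k_m})_{m,j ∈ Ω_l}, and Γ̂_l = (s_{k_j + k_m + 2 e_l})_{m,j ∈ Ω_l}. Then Ker Γ_l ⊆ Ker Γ̂_l, i.e. every complex vector α with Γ_l α = 0 satisfies Γ̂_l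 α = 0. -/
/-!
For a real vector `a` with `Γ_l a = 0`, the function `p = ∑ⱼ aⱼ t^{k_j}` satisfies
`∫ p² dμ = aᵀ Γ_l a = 0`, so `p = 0` μ-almost everywhere, and then
`(Γ̂_l a)_m = ∫ t^{k_m} t_l² p dμ = 0`. As both matrices are real, a complex vector is handled
through its real and imaginary parts.
-/

open MeasureTheory Matrix

theorem Finset.prod_pow_add_apply {ι M : Type*} [Fintype ι] [CommMonoid M] (t : ι → M)
    (a b : ι → ℕ) : ∏ i, t i ^ (a + b) i = (∏ i, t i ^ a i) * ∏ i, t i ^ b i := by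
  simp only [Pi.add_apply, pow_add, Finset.prod_mul_distrib]

theorem Finset.prod_pow_single_apply {ι M : Type*} [Fintype ι] [DecidableEq ι] [CommMonoid M]
    (t : ι → M) (l : ι) (e : ℕ) : ∏ i, t i ^ (Pi.single l e : ι → ℕ) i = t l ^ e := by
  simp [Pi.single_apply]

theorem Matrix.map_ofReal_mulVec_eq_zero_iff {κ ι : Type*} [Fintype ι] (M : Matrix κ ι ℝ)
    (α : ι → ℂ) :
    M.map (↑) *ᵥ α = 0 ↔ M *ᵥ (fun i => (α i).re) = 0 ∧ M *ᵥ (fun i => (α i).im) = 0 := by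
  simp only [funext_iff, Complex.ext_iff, mulVec, dotProduct, map_apply,
    Complex.re_sum, Complex.im_sum, Complex.re_ofReal_mul, Complex.im_ofReal_mul,
    Pi.zero_apply, Complex.zero_re, Complex.zero_im]
  exact forall_and

theorem Matrix.map_ofReal_mulVec_eq_zero_of_ker_le {κ κ' ι : Type*} [Fintype ι]
    {M : Matrix κ ι ℝ} {N : Matrix κ' ι ℝ} (hMN : ∀ a, M *ᵥ a = 0 → N *ᵥ a = 0) (α : ι → ℂ)
    (hα : M.map (↑) *ᵥ α = 0) : N.map (↑) *ᵥ α = 0 := by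
  rw [map_ofReal_mulVec_eq_zero_iff] at hα ⊢
  exact ⟨hMN _ hα.1, hMN _ hα.2⟩

section IntegralGram

variable {X ι : Type*} [MeasurableSpace X] {μ : Measure X} [Fintype ι]

variable (μ) in
noncomputable def integralGram (g f : ι → X → ℝ) : Matrix ι ι ℝ :=
  of fun m j => ∫ x, g m x * f j x ∂μ

variable {g f : ι → X → ℝ}

theorem integrable_mul_sum (hgf : ∀ m j, Integrable (fun x => g m x * f j x) μ) (a : ι → ℝ)
    (m : ι) : Integrable (fun x => g m x * ∑ j, a j * f j x) μ := by
  simp only [Finset.mul_sum, mul_left_comm (g m _)]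
  exact integrable_finsetSum _ fun j _ => (hgf m j).const_mul (a j)

theorem integralGram_mulVec_apply (hgf : ∀ m j, Integrable (fun x => g m x * f j x) μ)
    (a : ι → ℝ) (m : ι) :
    (integralGram μ g f *ᵥ a) m = ∫ x, g m x * ∑ j, a j * f j x ∂μ := by
  simp only [Finset.mul_sum, mul_left_comm (g m _)]
  rw [integral_finsetSum _ fun j _ => (hgf m j).const_mul (a j)]
  simp only [integral_const_mul, mulVec, dotProduct, integralGram, of_apply, mul_comm]

theorem integralGram_mulVec_eq_zero_of_ae_sum_eq_zero
    (hgf : ∀ m j, Integrable (fun x => g m x * f j x) μ) {a : ι → ℝ}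
    (ha : (fun x => ∑ j, a j * f j x) =ᵐ[μ] 0) : integralGram μ g f *ᵥ a = 0 := by
  ext m
  rw [integralGram_mulVec_apply hgf]
  refine integral_eq_zero_of_ae ?_
  filter_upwards [ha] with x hx
  simp [hx]

theorem integral_sq_sum_eq_dotProduct_integralGram_mulVec
    (hf : ∀ i j, Integrable (fun x => f i x * f j x) μ) (a : ι → ℝ) :
    ∫ x, (∑ j, a j * f j x) ^ 2 ∂μ = a ⬝ᵥ integralGram μ f f *ᵥ a := by
  simp only [sq, Finset.sum_mul, mul_assoc]
  rw [integral_finsetSum _ fun m _ => (integrable_mul_sum hf a m).const_mul (a m)]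
  simp only [integral_const_mul, dotProduct, integralGram_mulVec_apply hf]

theorem ae_sum_eq_zero_of_integralGram_mulVec_eq_zero
    (hf : ∀ i j, Integrable (fun x => f i x * f j x) μ) {a : ι → ℝ}
    (ha : integralGram μ f f *ᵥ a = 0) : (fun x => ∑ j, a j * f j x) =ᵐ[μ] 0 := by
  have hsq : Integrable (fun x => (∑ j, a j * f j x) ^ 2) μ := by
    simp only [sq, Finset.sum_mul, mul_assoc]
    exact integrable_finsetSum _ fun m _ => (integrable_mul_sum hf a m).const_mul (a m)
  have hzero : ∫ x, (∑ j, a j * f j x) ^ 2 ∂μ = 0 := by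
    rw [integral_sq_sum_eq_dotProduct_integralGram_mulVec hf, ha, dotProduct_zero]
  filter_upwards [(integral_eq_zero_iff_of_nonneg (fun x => sq_nonneg _) hsq).mp hzero]
    with x hx
  exact pow_eq_zero_iff two_ne_zero |>.mp hx

theorem integralGram_mulVec_eq_zero_of_mulVec_eq_zero
    (hf : ∀ i j, Integrable (fun x => f i x * f j x) μ)
    (hgf : ∀ m j, Integrable (fun x => g m x * f j x) μ) {a : ι → ℝ}
    (ha : integralGram μ f f *ᵥ a = 0) : integralGram μ g f *ᵥ a = 0 :=
  integralGram_mulVec_eq_zero_of_ae_sum_eq_zero hgf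
    (ae_sum_eq_zero_of_integralGram_mulVec_eq_zero hf ha)

end IntegralGram

theorem moment_matrix_kernel_condition_general (n : ℕ) (ρ : ℕ)
    (μ : Measure (Fin n → ℝ))
    (k : Fin (ρ + 1) → (Fin n → ℕ))
    (l : Fin n)
    (hint : ∀ j m : Fin (ρ + 1),
      Integrable (fun t : Fin n → ℝ => ∏ i, t i ^ ((k j + k m) i)) μ)
    (hint' : ∀ j m : Fin (ρ + 1),
      Integrable (fun t : Fin n → ℝ =>
        ∏ i, t i ^ ((k j + k m + (Pi.single l 2 : Fin n → ℕ)) i)) μ)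
    (s : (Fin n → ℕ) → ℝ)
    (hs : ∀ j m : Fin (ρ + 1),
      s (k j + k m) = ∫ t : Fin n → ℝ, (∏ i, t i ^ ((k j + k m) i)) ∂μ)
    (hs' : ∀ j m : Fin (ρ + 1),
      s (k j + k m + (Pi.single l 2 : Fin n → ℕ)) =
        ∫ t : Fin n → ℝ, (∏ i, t i ^ ((k j + k m + (Pi.single l 2 : Fin n → ℕ)) i)) ∂μ) :
    ∀ α : {j : Fin (ρ + 1) // k j + Pi.single l 1 ∈ Set.range k} → ℂ,
      (Matrix.of fun m j : {j : Fin (ρ + 1) // k j + Pi.single l 1 ∈ Set.range k} =>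
        ((s (k j.val + k m.val) : ℝ) : ℂ)).mulVec α = 0 →
      (Matrix.of fun m j : {j : Fin (ρ + 1) // k j + Pi.single l 1 ∈ Set.range k} =>
        ((s (k j.val + k m.val + (Pi.single l 2 : Fin n → ℕ)) : ℝ) : ℂ)).mulVec α = 0 := by
  intro α hα
  let f (j : {j // k j + Pi.single l 1 ∈ Set.range k}) (t : Fin n → ℝ) : ℝ := ∏ i, t i ^ k j i
  let g (m : {j // k j + Pi.single l 1 ∈ Set.range k}) (t : Fin n → ℝ) : ℝ := f m t * t l ^ 2
  have hmonomial (j m : Fin (ρ + 1)) (t : Fin n → ℝ) :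
      ∏ i, t i ^ (k j + k m + (Pi.single l 2 : Fin n → ℕ)) i =
        (∏ i, t i ^ k m i) * t l ^ 2 * ∏ i, t i ^ k j i := by
    rw [Finset.prod_pow_add_apply, Finset.prod_pow_add_apply, Finset.prod_pow_single_apply]
    ring
  have hff (i j) : Integrable (fun t => f i t * f j t) μ := by
    simpa only [Finset.prod_pow_add_apply] using hint i j
  have hgf (m j) : Integrable (fun t => g m t * f j t) μ := by
    simpa only [hmonomial] using hint' j m
  have hΓ : (of fun m j : {j // k j + Pi.single l 1 ∈ Set.range k} =>
      ((s (k j.val + k m.val) : ℝ) : ℂ)) = (integralGram μ f f).map (↑) := by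
    ext m j
    simp only [of_apply, map_apply, integralGram, hs, Finset.prod_pow_add_apply, mul_comm, f]
  have hΓ' : (of fun m j : {j // k j + Pi.single l 1 ∈ Set.range k} =>
      ((s (k j.val + k m.val + (Pi.single l 2 : Fin n → ℕ)) : ℝ) : ℂ)) =
        (integralGram μ g f).map (↑) := by
    ext m j
    simp only [of_apply, map_apply, integralGram, hs', hmonomial, f, g]
  rw [hΓ] at hα
  rw [hΓ']
  exact map_ofReal_mulVec_eq_zero_of_ker_le
    (fun a => integralGram_mulVec_eq_zero_of_mulVec_eq_zero hff hgf) α hα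

/-- The necessary condition `Ker Γ_l ⊆ Ker Γ̂_l` for the solvability of the truncated
multidimensional moment problem: with `Ω_l = {j : k_j + e_l ∈ K}`,
`Γ_l = (s_{k_j + k_m})_{m,j ∈ Ω_l}` and `Γ̂_l = (s_{k_j + k_m + 2e_l})_{m,j ∈ Ω_l}`,
every vector annihilated by `Γ_l` is annihilated by `Γ̂_l`. -/
theorem moment_matrix_kernel_condition (n : ℕ) (hn : 1 ≤ n) (ρ : ℕ)
    (μ : Measure (Fin n → ℝ))
    (k : Fin (ρ + 1) → (Fin n → ℕ)) (hk : Function.Injective k)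
    (l : Fin n)
    (hint : ∀ j m : Fin (ρ + 1),
      Integrable (fun t : Fin n → ℝ => ∏ i, t i ^ ((k j + k m) i)) μ)
    (hint' : ∀ j m : Fin (ρ + 1),
      Integrable (fun t : Fin n → ℝ =>
        ∏ i, t i ^ ((k j + k m + (Pi.single l 2 : Fin n → ℕ)) i)) μ)
    (s : (Fin n → ℕ) → ℝ)
    (hs : ∀ j m : Fin (ρ + 1),
      s (k j + k m) = ∫ t : Fin n → ℝ, (∏ i, t i ^ ((k j + k m) i)) ∂μ)
    (hs' : ∀ j m : Fin (ρ + 1),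
      s (k j + k m + (Pi.single l 2 : Fin n → ℕ)) =
        ∫ t : Fin n → ℝ, (∏ i, t i ^ ((k j + k m + (Pi.single l 2 : Fin n → ℕ)) i)) ∂μ) :
    ∀ α : {j : Fin (ρ + 1) // k j + Pi.single l 1 ∈ Set.range k} → ℂ,
      (Matrix.of fun m j : {j : Fin (ρ + 1) // k j + Pi.single l 1 ∈ Set.range k} =>
        ((s (k j.val + k m.val) : ℝ) : ℂ)).mulVec α = 0 →
      (Matrix.of fun m j : {j : Fin (ρ + 1) // k j + Pi.single l 1 ∈ Set.range k} =>
        ((s (k j.val + k m.val + (Pi.single l 2 : Fin n → ℕ)) : ℝ) : ℂ)).mulVec α = 0 :=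
  moment_matrix_kernel_condition_general n ρ μ k l hint hint' s hs hs'
end
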